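/- If C is a symmetric monoidal category then C_{P_ω}, with tensor on morphisms U ⊗ U' = {u ⊗ u' | u ∈ U, u' ∈ U'}, is a symmetric monoidal category; if C is dagger compact closed then C_{P_ω} is dagger compact closed with U† = {u† | u ∈ U}. -/

import Mathlib

open CategoryTheory MonoidalCategory

attribute [local instance] Classical.decEq

universe v u

/-- `CP C` (written `C_{P_ω}`) has the same objects as `C`; its hom-sets are the finite
subsets of the hom-sets of `C`. -/
def CP (C : Type u) : Type u := C

/-- The object of `C_{P_ω}` corresponding to an object of `C`. -/
def CP.mk {C : Type u} (X : C) : CP C := X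

/-- The object of `C` underlying an object of `C_{P_ω}`. -/
def CP.un {C : Type u} (X : CP C) : C := X

instance CP.quiver {C : Type u} [Category.{v} C] : Quiver.{v} (CP C) :=
  ⟨fun A B => Finset (A.un ⟶ B.un)⟩

noncomputable instance CP.categoryStruct {C : Type u} [Category.{v} C] :
    CategoryStruct.{v} (CP C) where
  id A := ({𝟙 A.un} : Finset (A.un ⟶ A.un))
  comp {_ _ _} U V := Finset.image₂ (fun u v => u ≫ v) U V

noncomputable instance CP.category {C : Type u} [Category.{v} C] : Category.{v} (CP C) where
  id_comp U := by
    show Finset.image₂ (fun u v => u ≫ v) {𝟙 _} U = U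
    simp [Finset.image₂_singleton_left]
  comp_id U := by
    show Finset.image₂ (fun u v => u ≫ v) U {𝟙 _} = U
    simp [Finset.image₂_singleton_right]
  assoc U V W := by
    show Finset.image₂ (fun u v => u ≫ v) (Finset.image₂ (fun u v => u ≫ v) U V) W
      = Finset.image₂ (fun u v => u ≫ v) U (Finset.image₂ (fun u v => u ≫ v) V W)
    exact Finset.image₂_assoc fun a b c => Category.assoc a b c

/-- Lift an isomorphism of `C` to an isomorphism of `C_{P_ω}` (singletons). -/
noncomputable def cpIso {C : Type u} [Category.{v} C] {A B : C} (h : A ≅ B) :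
    CP.mk A ≅ CP.mk B where
  hom := ({h.hom} : Finset (A ⟶ B))
  inv := ({h.inv} : Finset (B ⟶ A))
  hom_inv_id := by
    show Finset.image₂ (fun u v => u ≫ v) {h.hom} {h.inv} = ({𝟙 A} : Finset (A ⟶ A))
    simp
  inv_hom_id := by
    show Finset.image₂ (fun u v => u ≫ v) {h.inv} {h.hom} = ({𝟙 B} : Finset (B ⟶ B))
    simp

/-- The monoidal data on `C_{P_ω}`: the tensor of morphisms is elementwise,
`U ⊗ U' = {u ⊗ u' | u ∈ U, u' ∈ U'}`; unit, associator and unitors are inherited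
from `C` via singletons. -/
noncomputable instance cpMonStruct (C : Type u) [Category.{v} C] [MonoidalCategory C] :
    MonoidalCategoryStruct (CP C) where
  tensorObj X Y := CP.mk (X.un ⊗ Y.un)
  whiskerLeft X {_ _} U := U.image fun g => X.un ◁ g
  whiskerRight {_ _} U Y := U.image fun g => g ▷ Y.un
  tensorHom {_ _ _ _} U V := Finset.image₂ (fun u v => MonoidalCategoryStruct.tensorHom u v) U V
  tensorUnit := CP.mk (𝟙_ C)
  associator X Y Z := cpIso (α_ X.un Y.un Z.un)
  leftUnitor X := cpIso (λ_ X.un)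
  rightUnitor X := cpIso (ρ_ X.un)

/-- Compact closed data: duals, cups (coevaluations) and caps (evaluations). -/
structure CCData (C : Type u) [Category.{v} C] [MonoidalCategoryStruct C] where
  dual : C → C
  coev : ∀ A : C, 𝟙_ C ⟶ A ⊗ dual A
  ev : ∀ A : C, dual A ⊗ A ⟶ 𝟙_ C

/-- The snake (zig-zag) equations. -/
def IsCompactClosed {C : Type u} [Category.{v} C] [MonoidalCategoryStruct C]
    (d : CCData C) : Prop :=
  (∀ A : C, (λ_ A).inv ≫ (d.coev A ▷ A) ≫ (α_ A (d.dual A) A).hom ≫ (A ◁ d.ev A) ≫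
      (ρ_ A).hom = 𝟙 A) ∧
  (∀ A : C, (ρ_ (d.dual A)).inv ≫ (d.dual A ◁ d.coev A) ≫
      (α_ (d.dual A) A (d.dual A)).inv ≫ (d.ev A ▷ d.dual A) ≫ (λ_ (d.dual A)).hom
      = 𝟙 (d.dual A))

/-- A dagger: an operation reversing morphisms. -/
structure DagData (C : Type u) [Category.{v} C] where
  dag : ∀ {A B : C}, (A ⟶ B) → (B ⟶ A)

/-- The dagger axioms: identity-on-objects involutive contravariant functor compatible
with the tensor. -/
def IsDagger {C : Type u} [Category.{v} C] [MonoidalCategoryStruct C]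
    (D : DagData C) : Prop :=
  (∀ A : C, D.dag (𝟙 A) = 𝟙 A) ∧
  (∀ {A B E : C} (f : A ⟶ B) (g : B ⟶ E), D.dag (f ≫ g) = D.dag g ≫ D.dag f) ∧
  (∀ {A B : C} (f : A ⟶ B), D.dag (D.dag f) = f) ∧
  (∀ {A B A' B' : C} (f : A ⟶ B) (g : A' ⟶ B'),
    D.dag (MonoidalCategoryStruct.tensorHom f g)
      = MonoidalCategoryStruct.tensorHom (D.dag f) (D.dag g))

/-- The compact closed data on `C_{P_ω}`: singletons of the cups and caps of `C`. -/
noncomputable def cpCC {C : Type u} [Category.{v} C] [MonoidalCategory C] (d : CCData C) :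
    CCData (CP C) where
  dual A := CP.mk (d.dual A.un)
  coev A := ({d.coev A.un} : Finset _)
  ev A := ({d.ev A.un} : Finset _)

/-- The dagger on `C_{P_ω}`: `U† = {u† | u ∈ U}`. -/
noncomputable def cpDag {C : Type u} [Category.{v} C] (D : DagData C) : DagData (CP C) where
  dag {_ _} U := U.image D.dag

/-!
Every structure morphism of `C_{P_ω}` (identity, associator, unitors, braiding, cups, caps) is
a singleton, while composition, whiskering, tensor and dagger act elementwise on finite sets.
Hence each coherence law (pentagon, triangle, hexagons, symmetry, snake equations, the relation
between caps and daggered cups) is the singleton of the same law in `C`, and each naturality or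
functoriality law is an identity between images of finite sets that holds because the law holds
for every element; these are the associativity, interchange and distributivity laws of
`Finset.image₂`.
-/

-- Lets the `Finset` lemmas see through the type synonym `CP`.
attribute [reducible] CP.un CP.mk

open Finset

namespace CP

variable {C : Type u} [Category.{v} C]

lemma comp_eq_image₂ {A B E : CP C} (U : A ⟶ B) (V : B ⟶ E) :
    U ≫ V = image₂ (· ≫ ·) U V := rfl

lemma id_eq_singleton (A : CP C) : 𝟙 A = ({𝟙 A.un} : Finset _) := rfl

lemma _root_.cpIso_hom_eq_singleton {A B : C} (h : A ≅ B) :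
    (cpIso h).hom = ({h.hom} : Finset _) := rfl

lemma _root_.cpIso_inv_eq_singleton {A B : C} (h : A ≅ B) :
    (cpIso h).inv = ({h.inv} : Finset _) := rfl

lemma image_comp_singleton_eq_singleton_comp_image {α : Type*} {P Q R S : C} (U : Finset α)
    {F : α → (P ⟶ Q)} {G : α → (R ⟶ S)} {f : Q ⟶ S} {g : P ⟶ R}
    (h : ∀ a, F a ≫ f = g ≫ G a) :
    image₂ (· ≫ ·) (U.image F) {f} = image₂ (· ≫ ·) {g} (U.image G) := by
  simp only [image₂_singleton_right, image₂_singleton_left, image_image, Function.comp_def, h]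

variable [MonoidalCategory C]

lemma whiskerLeft_eq_image (X : CP C) {A B : CP C} (U : A ⟶ B) :
    X ◁ U = U.image (X.un ◁ ·) := rfl

lemma whiskerRight_eq_image {A B : CP C} (U : A ⟶ B) (Y : CP C) :
    U ▷ Y = U.image (· ▷ Y.un) := rfl

lemma tensorHom_eq_image₂ {A B A' B' : CP C} (U : A ⟶ B) (V : A' ⟶ B') :
    U ⊗ₘ V = image₂ (fun (u : A.un ⟶ B.un) (v : A'.un ⟶ B'.un) => u ⊗ₘ v) U V := rfl

lemma associator_hom_eq_singleton (X Y Z : CP C) :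
    (α_ X Y Z).hom = ({(α_ X.un Y.un Z.un).hom} : Finset _) := rfl

lemma associator_inv_eq_singleton (X Y Z : CP C) :
    (α_ X Y Z).inv = ({(α_ X.un Y.un Z.un).inv} : Finset _) := rfl

lemma leftUnitor_hom_eq_singleton (X : CP C) : (λ_ X).hom = ({(λ_ X.un).hom} : Finset _) := rfl

lemma leftUnitor_inv_eq_singleton (X : CP C) : (λ_ X).inv = ({(λ_ X.un).inv} : Finset _) := rfl

lemma rightUnitor_hom_eq_singleton (X : CP C) : (ρ_ X).hom = ({(ρ_ X.un).hom} : Finset _) := rfl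

lemma rightUnitor_inv_eq_singleton (X : CP C) : (ρ_ X).inv = ({(ρ_ X.un).inv} : Finset _) := rfl

noncomputable instance monoidalCategory : MonoidalCategory (CP C) where
  __ := cpMonStruct C
  tensorHom_def U V := by
    simp only [tensorHom_eq_image₂, comp_eq_image₂, whiskerLeft_eq_image, whiskerRight_eq_image,
      image₂_image_left, image₂_image_right]
    exact image₂_congr' MonoidalCategory.tensorHom_def
  id_tensorHom_id X₁ X₂ := by
    simp only [tensorHom_eq_image₂, id_eq_singleton, image₂_singleton]
    exact congrArg _ (MonoidalCategory.id_tensorHom_id _ _)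
  tensorHom_comp_tensorHom U₁ U₂ V₁ V₂ :=
    image₂_image₂_image₂_comm MonoidalCategory.tensorHom_comp_tensorHom
  whiskerLeft_id X Y := by
    simp only [whiskerLeft_eq_image, id_eq_singleton, image_singleton]
    exact congrArg _ (MonoidalCategory.whiskerLeft_id _ _)
  id_whiskerRight X Y := by
    simp only [whiskerRight_eq_image, id_eq_singleton, image_singleton]
    exact congrArg _ (MonoidalCategory.id_whiskerRight _ _)
  associator_naturality U₁ U₂ U₃ := by
    simp only [tensorHom_eq_image₂, comp_eq_image₂, associator_hom_eq_singleton,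
      image₂_singleton_right, image₂_singleton_left, image_image₂]
    exact image₂_assoc MonoidalCategory.associator_naturality
  leftUnitor_naturality U :=
    (image_comp_singleton_eq_singleton_comp_image U
      MonoidalCategory.leftUnitor_naturality).trans (congrArg _ image_id')
  rightUnitor_naturality U :=
    (image_comp_singleton_eq_singleton_comp_image U
      MonoidalCategory.rightUnitor_naturality).trans (congrArg _ image_id')
  pentagon W X Y Z := by
    simp only [comp_eq_image₂, whiskerLeft_eq_image, whiskerRight_eq_image,
      associator_hom_eq_singleton, image_singleton, image₂_singleton]
    exact congrArg _ (MonoidalCategory.pentagon _ _ _ _)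
  triangle X Y := by
    simp only [comp_eq_image₂, whiskerLeft_eq_image, whiskerRight_eq_image,
      associator_hom_eq_singleton, leftUnitor_hom_eq_singleton, rightUnitor_hom_eq_singleton,
      image_singleton, image₂_singleton]
    exact congrArg _ (MonoidalCategory.triangle _ _)

noncomputable instance symmetricCategory [SymmetricCategory C] : SymmetricCategory (CP C) where
  braiding X Y := cpIso (β_ X.un Y.un)
  braiding_naturality_right X _ _ U :=
    image_comp_singleton_eq_singleton_comp_image U
      (BraidedCategory.braiding_naturality_right X.un)
  braiding_naturality_left U Z :=
    image_comp_singleton_eq_singleton_comp_image U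
      (BraidedCategory.braiding_naturality_left · Z.un)
  hexagon_forward X Y Z := by
    simp only [comp_eq_image₂, whiskerLeft_eq_image, whiskerRight_eq_image,
      associator_hom_eq_singleton, cpIso_hom_eq_singleton, image_singleton, image₂_singleton]
    exact congrArg _ (BraidedCategory.hexagon_forward _ _ _)
  hexagon_reverse X Y Z := by
    simp only [comp_eq_image₂, whiskerLeft_eq_image, whiskerRight_eq_image,
      associator_inv_eq_singleton, cpIso_hom_eq_singleton, image_singleton, image₂_singleton]
    exact congrArg _ (BraidedCategory.hexagon_reverse _ _ _)
  symmetry X Y := by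
    simp only [comp_eq_image₂, id_eq_singleton, cpIso_hom_eq_singleton, image₂_singleton]
    exact congrArg _ (SymmetricCategory.symmetry _ _)

end CP

section DaggerCompact

open CP

variable {C : Type u} [Category.{v} C] [MonoidalCategory C]

theorem cpCC_isCompactClosed {d : CCData C} (hd : IsCompactClosed d) :
    IsCompactClosed (cpCC d) := by
  refine ⟨fun A => ?_, fun A => ?_⟩
  · simp only [cpCC, comp_eq_image₂, whiskerLeft_eq_image, whiskerRight_eq_image,
      leftUnitor_inv_eq_singleton, rightUnitor_hom_eq_singleton, associator_hom_eq_singleton,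
      id_eq_singleton, image_singleton, image₂_singleton]
    exact congrArg _ (hd.1 A.un)
  · simp only [cpCC, comp_eq_image₂, whiskerLeft_eq_image, whiskerRight_eq_image,
      rightUnitor_inv_eq_singleton, leftUnitor_hom_eq_singleton, associator_inv_eq_singleton,
      id_eq_singleton, image_singleton, image₂_singleton]
    exact congrArg _ (hd.2 A.un)

theorem cpDag_isDagger {D : DagData C} (hD : IsDagger D) : IsDagger (cpDag D) := by
  obtain ⟨dag_id, dag_comp, dag_dag, dag_tensorHom⟩ := hD
  refine ⟨fun A => ?_, fun U V => ?_, fun U => ?_, fun U V => ?_⟩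
  · exact (image_singleton _ _).trans (congrArg _ (dag_id A.un))
  · exact image_image₂_antidistrib dag_comp
  · simp only [cpDag, image_image, Function.comp_def, dag_dag, image_id']
  · exact image_image₂_distrib dag_tensorHom

theorem cpCC_ev_eq_braiding_inv_comp_dag [BraidedCategory C] {d : CCData C} {D : DagData C}
    (hev : ∀ A : C, d.ev A = (β_ A (d.dual A)).inv ≫ D.dag (d.coev A)) (A : CP C) :
    (cpCC d).ev A = (cpIso (β_ A.un (d.dual A.un))).inv ≫ (cpDag D).dag ((cpCC d).coev A) := by
  simp only [cpCC, cpDag, cpIso_inv_eq_singleton, comp_eq_image₂, image_singleton,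
    image₂_singleton]
  exact congrArg _ (hev A.un)

end DaggerCompact

/-- If `C` is a symmetric monoidal category then `C_{P_ω}`, with
elementwise tensor of morphisms, is a symmetric monoidal category (with data exactly
`cpMonStruct C`); and if `C` is dagger compact closed then `C_{P_ω}` is dagger compact
closed with `U† = {u† | u ∈ U}` and cups and caps the singletons of those of `C`. -/
theorem cp_symmetric_monoidal_dagger_compact (C : Type u) [Category.{v} C]
    [MonoidalCategory C] [SymmetricCategory C] :
    (∃ M : MonoidalCategory (CP C),
      M.toMonoidalCategoryStruct = cpMonStruct C ∧
      ∃ S : @SymmetricCategory (CP C) _ M,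
        ∀ X Y : C, HEq (@BraidedCategory.braiding (CP C) _ M S.toBraidedCategory
            (CP.mk X) (CP.mk Y)) (cpIso (β_ X Y))) ∧
    (∀ (d : CCData C) (D : DagData C), IsCompactClosed d → IsDagger D →
      (∀ A : C, d.ev A = (β_ A (d.dual A)).inv ≫ D.dag (d.coev A)) →
      IsCompactClosed (cpCC d) ∧ IsDagger (cpDag D) ∧
      (∀ A : CP C, (cpCC d).ev A
        = (cpIso (β_ A.un (d.dual A.un))).inv ≫ (cpDag D).dag ((cpCC d).coev A))) :=
  ⟨⟨CP.monoidalCategory, rfl, CP.symmetricCategory, fun _ _ => HEq.rfl⟩,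
    fun _ _ hd hD hev =>
      ⟨cpCC_isCompactClosed hd, cpDag_isDagger hD, cpCC_ev_eq_braiding_inv_comp_dag hev⟩⟩
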